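/- Fix a real n×n matrix H with ‖H‖ < 1, real n×n matrices G and Q, and ν ∈ ℝⁿ. For a bounded sequence X̄ : ℕ → ℝⁿ define X̂_k(X̄) := H^k ν + ∑_{j=0}^{k-1} H^{k-1-j} G ∑_{s=j+1}^{∞} (Hᵀ)^{s-j-1} Q X̄_s. Then for any two bounded sequences X̄¹, X̄² : ℕ → ℝⁿ and every k ∈ ℕ, ‖X̂_k(X̄¹) - X̂_k(X̄²)‖ ≤ (‖Q‖ ‖G‖ / (1 - ‖H‖)²) · sup_j ‖X̄¹_j - X̄²_j‖. -/

import Mathlib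

/-!
The inner series is a contraction-weighted sum `∑ₘ (Hᵀ)ᵐ Q X̄ₘ₊ⱼ₊₁` with `‖Hᵀ‖ = ‖H‖ < 1`, so a
uniform bound `D` on `X̄¹ - X̄²` moves it by at most `‖Q‖ D / (1 - ‖H‖)`. The outer sum
`∑ⱼ Hᵏ⁻¹⁻ʲ G (⋯)` is a partial geometric sum, which contributes a second factor
`‖G‖ / (1 - ‖H‖)`; the term `Hᵏ ν` cancels in the difference.
-/

/-- The (single-type) aggregate trajectory
`X̂_k(X̄) = H^k ν + ∑_{j=0}^{k-1} H^{k-1-j} G ∑_{s=j+1}^∞ (Hᵀ)^{s-j-1} Q X̄_s`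
(inner series reindexed via `s = j + 1 + m`). Matrices are modeled as continuous
linear maps on Euclidean space; transpose is the adjoint. -/
noncomputable def XhatSeq {n : ℕ}
    (H G Q : EuclideanSpace ℝ (Fin n) →L[ℝ] EuclideanSpace ℝ (Fin n))
    (ν : EuclideanSpace ℝ (Fin n)) (X : ℕ → EuclideanSpace ℝ (Fin n))
    (k : ℕ) : EuclideanSpace ℝ (Fin n) :=
  (H ^ k) ν +
    ∑ j ∈ Finset.range k, (H ^ (k - 1 - j))
      (G (∑' m : ℕ, ((ContinuousLinearMap.adjoint H) ^ m) (Q (X (j + 1 + m)))))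

open Finset

section ContractionSums

variable {𝕜 E : Type*} [NontriviallyNormedField 𝕜] [NormedAddCommGroup E] [NormedSpace 𝕜 E]

theorem ContinuousLinearMap.norm_pow_apply_le (T : E →L[𝕜] E) (m : ℕ) (x : E) :
    ‖(T ^ m) x‖ ≤ ‖T‖ ^ m * ‖x‖ := by
  induction m generalizing x with
  | zero => simp
  | succ m ih =>
    calc ‖(T ^ (m + 1)) x‖ = ‖(T ^ m) (T x)‖ := rfl
      _ ≤ ‖T‖ ^ m * (‖T‖ * ‖x‖) := (ih (T x)).trans (by gcongr; exact T.le_opNorm x)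
      _ = ‖T‖ ^ (m + 1) * ‖x‖ := by ring

/-- Holds without any summability assumption on `f` or `g`: if one of them is not summable,
neither is the other and both sums are the junk value `0`. -/
theorem norm_tsum_sub_tsum_le_of_norm_sub_le {ι F : Type*} [NormedAddCommGroup F]
    [CompleteSpace F] {f g : ι → F} {b : ι → ℝ} {B : ℝ} (hb : HasSum b B)
    (h : ∀ i, ‖f i - g i‖ ≤ b i) : ‖∑' i, f i - ∑' i, g i‖ ≤ B := by
  have hsub : Summable fun i => f i - g i := .of_norm_bounded hb.summable h
  by_cases hf : Summable f
  · have hg : Summable g := by simpa using hf.sub hsub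
    rw [← hf.tsum_sub hg]
    exact tsum_of_norm_bounded hb h
  · have hg : ¬Summable g := fun hg => hf (by simpa using hg.add hsub)
    rw [tsum_eq_zero_of_not_summable hf, tsum_eq_zero_of_not_summable hg, sub_zero, norm_zero]
    exact hb.nonneg fun i => (norm_nonneg _).trans (h i)

theorem norm_tsum_pow_apply_sub_le [CompleteSpace E] {T : E →L[𝕜] E} (hT : ‖T‖ < 1)
    {x y : ℕ → E} {D : ℝ} (h : ∀ m, ‖x m - y m‖ ≤ D) :
    ‖∑' m, (T ^ m) (x m) - ∑' m, (T ^ m) (y m)‖ ≤ D / (1 - ‖T‖) := by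
  have hgeom := (hasSum_geometric_of_lt_one (norm_nonneg T) hT).mul_right D
  rw [div_eq_inv_mul]
  refine norm_tsum_sub_tsum_le_of_norm_sub_le hgeom fun m => ?_
  rw [← map_sub]
  exact (T.norm_pow_apply_le m _).trans (by gcongr; exact h m)

theorem norm_sum_range_pow_apply_le {T : E →L[𝕜] E} (hT : ‖T‖ < 1) {v : ℕ → E} {B : ℝ}
    (hB : 0 ≤ B) (hv : ∀ j, ‖v j‖ ≤ B) (k : ℕ) :
    ‖∑ j ∈ range k, (T ^ (k - 1 - j)) (v j)‖ ≤ B / (1 - ‖T‖) := by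
  have hgeom : ∑ j ∈ range k, ‖T‖ ^ (k - 1 - j) ≤ 1 / (1 - ‖T‖) := by
    rw [sum_range_reflect (‖T‖ ^ ·) k, range_eq_Ico]
    simpa using geom_sum_Ico_le_of_lt_one (m := 0) (n := k) (norm_nonneg T) hT
  calc ‖∑ j ∈ range k, (T ^ (k - 1 - j)) (v j)‖
      ≤ ∑ j ∈ range k, ‖T‖ ^ (k - 1 - j) * B :=
        norm_sum_le_of_le _ fun j _ => (T.norm_pow_apply_le _ _).trans (by gcongr; exact hv j)
    _ = (∑ j ∈ range k, ‖T‖ ^ (k - 1 - j)) * B := (sum_mul ..).symm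
    _ ≤ 1 / (1 - ‖T‖) * B := by gcongr
    _ = B / (1 - ‖T‖) := by ring

end ContractionSums

theorem XhatSeq_sub_XhatSeq {n : ℕ}
    (H G Q : EuclideanSpace ℝ (Fin n) →L[ℝ] EuclideanSpace ℝ (Fin n))
    (ν : EuclideanSpace ℝ (Fin n)) (X1 X2 : ℕ → EuclideanSpace ℝ (Fin n)) (k : ℕ) :
    XhatSeq H G Q ν X1 k - XhatSeq H G Q ν X2 k =
      ∑ j ∈ range k, (H ^ (k - 1 - j))
        (G (∑' m, ((ContinuousLinearMap.adjoint H) ^ m) (Q (X1 (j + 1 + m))) -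
          ∑' m, ((ContinuousLinearMap.adjoint H) ^ m) (Q (X2 (j + 1 + m))))) := by
  simp only [XhatSeq, add_sub_add_left_eq_sub, ← sum_sub_distrib, map_sub]

theorem stmt4_general {n : ℕ}
    (H G Q : EuclideanSpace ℝ (Fin n) →L[ℝ] EuclideanSpace ℝ (Fin n))
    (hH : ‖H‖ < 1) (ν : EuclideanSpace ℝ (Fin n))
    (X1 X2 : ℕ → EuclideanSpace ℝ (Fin n))
    (D : ℝ) (hD : ∀ j, ‖X1 j - X2 j‖ ≤ D) :
    ∀ k, ‖XhatSeq H G Q ν X1 k - XhatSeq H G Q ν X2 k‖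
      ≤ ‖Q‖ * ‖G‖ / (1 - ‖H‖) ^ 2 * D := by
  intro k
  have hD0 : 0 ≤ D := (norm_nonneg _).trans (hD 0)
  have hHcontr : 0 < 1 - ‖H‖ := by linarith
  have hadj : ‖ContinuousLinearMap.adjoint H‖ = ‖H‖ :=
    LinearIsometryEquiv.norm_map ContinuousLinearMap.adjoint H
  have hQX : ∀ s, ‖Q (X1 s) - Q (X2 s)‖ ≤ ‖Q‖ * D := fun s => by
    rw [← map_sub]
    exact (Q.le_opNorm _).trans (by gcongr; exact hD s)
  rw [XhatSeq_sub_XhatSeq]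
  refine (norm_sum_range_pow_apply_le hH (B := ‖G‖ * (‖Q‖ * D / (1 - ‖H‖)))
    (by positivity) (fun j => ?_) k).trans_eq (by field_simp)
  refine (G.le_opNorm _).trans (mul_le_mul_of_nonneg_left ?_ (norm_nonneg G))
  rw [← hadj]
  exact norm_tsum_pow_apply_sub_le (hadj ▸ hH) fun m => hQX (j + 1 + m)

/-- With `‖H‖ < 1`, for any two bounded sequences `X̄¹, X̄²` and any
uniform bound `D` on `‖X̄¹_j - X̄²_j‖` (i.e. any upper bound of the sup), one has
`‖X̂_k(X̄¹) - X̂_k(X̄²)‖ ≤ (‖Q‖‖G‖/(1 - ‖H‖)²) D` for every `k`. -/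
theorem stmt4 {n : ℕ}
    (H G Q : EuclideanSpace ℝ (Fin n) →L[ℝ] EuclideanSpace ℝ (Fin n))
    (hH : ‖H‖ < 1) (ν : EuclideanSpace ℝ (Fin n))
    (X1 X2 : ℕ → EuclideanSpace ℝ (Fin n)) (C1 C2 : ℝ)
    (hX1 : ∀ k, ‖X1 k‖ ≤ C1) (hX2 : ∀ k, ‖X2 k‖ ≤ C2)
    (D : ℝ) (hD : ∀ j, ‖X1 j - X2 j‖ ≤ D) :
    ∀ k, ‖XhatSeq H G Q ν X1 k - XhatSeq H G Q ν X2 k‖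
      ≤ ‖Q‖ * ‖G‖ / (1 - ‖H‖) ^ 2 * D :=
  stmt4_general H G Q hH ν X1 X2 D hD
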